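/- arXiv:0910.0550 — 12 statements merged into one kernel-verified Lean document; each statement's English description precedes it below -/
import Mathlib

section
/- Every flexible g-alternative algebra A over a field F is alternative; that is, if A satisfies Axiom 2₁, Axiom 2₂, and (yx)y = y(xy) for all x, y ∈ A, then x²y = x(xy) and yx² = (yx)x for all x, y ∈ A. -/
/-!
Substituting `z := x` in either defining identity of a g-alternative algebra produces the two
flexible products `(xy)x` and `x(yx)`; flexibility makes them cancel, and what remains is left
alternativity (from Axiom 2₂) or right alternativity (from Axiom 2₁).
-/

section

variable {A : Type*} [Mul A] [AddGroup A]

theorem mul_self_mul_of_flexible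
    (h2 : ∀ x y z : A, (x * y) * z = x * (y * z) + x * (z * y) - (x * z) * y)
    (hflex : ∀ x y : A, (y * x) * y = y * (x * y)) (x y : A) :
    (x * x) * y = x * (x * y) := by
  have h := h2 x y x
  rw [hflex y x, add_sub_assoc, left_eq_add, sub_eq_zero] at h
  exact h.symm

theorem mul_mul_self_of_flexible
    (h1 : ∀ x y z : A, x * (y * z) = (x * y) * z + (y * x) * z - y * (x * z))
    (hflex : ∀ x y : A, (y * x) * y = y * (x * y)) (x y : A) :
    y * (x * x) = (y * x) * x := by
  have h := h1 x y x
  rw [hflex y x, add_sub_assoc, left_eq_add, sub_eq_zero] at h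
  exact h.symm

end

theorem flexible_g_alternative_is_alternative_general (A : Type*) [NonUnitalNonAssocRing A]
    (h1 : ∀ x y z : A, x * (y * z) = (x * y) * z + (y * x) * z - y * (x * z))
    (h2 : ∀ x y z : A, (x * y) * z = x * (y * z) + x * (z * y) - (x * z) * y)
    (hflex : ∀ x y : A, (y * x) * y = y * (x * y)) :
    (∀ x y : A, (x * x) * y = x * (x * y)) ∧
    (∀ x y : A, y * (x * x) = (y * x) * x) :=
  ⟨mul_self_mul_of_flexible h2 hflex, mul_mul_self_of_flexible h1 hflex⟩

/-- Every flexible g-alternative algebra over a field `F` is alternative. -/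
theorem flexible_g_alternative_is_alternative (F : Type*) [Field F] (A : Type*)
    [NonUnitalNonAssocRing A] [Module F A] [SMulCommClass F A A] [IsScalarTower F A A]
    (h1 : ∀ x y z : A, x * (y * z) = (x * y) * z + (y * x) * z - y * (x * z))
    (h2 : ∀ x y z : A, (x * y) * z = x * (y * z) + x * (z * y) - (x * z) * y)
    (hflex : ∀ x y : A, (y * x) * y = y * (x * y)) :
    (∀ x y : A, (x * x) * y = x * (x * y)) ∧
    (∀ x y : A, y * (x * x) = (y * x) * x) :=
  flexible_g_alternative_is_alternative_general A h1 h2 hflex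
end

section
/- In any g-alternative algebra A over a field F, the identity 2·(yx)y = 2·y(xy) holds for all x, y ∈ A (i.e. (yx)y + (yx)y = y(xy) + y(xy)). -/
/-- In any g-alternative algebra over a field `F`, `2·(yx)y = 2·y(xy)`. -/
theorem g_alternative_two_mul_flexible (F : Type*) [Field F] (A : Type*)
    [NonUnitalNonAssocRing A] [Module F A] [SMulCommClass F A A] [IsScalarTower F A A]
    (h1 : ∀ x y z : A, x * (y * z) = (x * y) * z + (y * x) * z - y * (x * z))
    (h2 : ∀ x y z : A, (x * y) * z = x * (y * z) + x * (z * y) - (x * z) * y) :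
    ∀ x y : A, (y * x) * y + (y * x) * y = y * (x * y) + y * (x * y) := by
  intro x y
  have hA := h1 y x y
  have hB := h2 x y y
  have hB' : (x * y) * y + (x * y) * y = x * (y * y) + x * (y * y) :=
    eq_sub_iff_add_eq.mp hB
  have hA' : y * (x * y) + x * (y * y) = (y * x) * y + (x * y) * y :=
    eq_sub_iff_add_eq.mp hA
  linear_combination (norm := abel) - hA' - hA' - hB'
end

section
/- If F is a field with characteristic different from 2, then every g-alternative algebra A over F is alternative: A satisfies the flexible law (yx)y = y(xy) and the laws x²y = x(xy) and yx² = (yx)x for all x, y ∈ A. -/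
/-- If `char F ≠ 2`, every g-alternative algebra over `F` is alternative. -/
theorem g_alternative_is_alternative_of_char_ne_two (F : Type*) [Field F]
    (hchar : ringChar F ≠ 2) (A : Type*)
    [NonUnitalNonAssocRing A] [Module F A] [SMulCommClass F A A] [IsScalarTower F A A]
    (h1 : ∀ x y z : A, x * (y * z) = (x * y) * z + (y * x) * z - y * (x * z))
    (h2 : ∀ x y z : A, (x * y) * z = x * (y * z) + x * (z * y) - (x * z) * y) :
    (∀ x y : A, (y * x) * y = y * (x * y)) ∧
    (∀ x y : A, (x * x) * y = x * (x * y)) ∧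
    (∀ x y : A, y * (x * x) = (y * x) * x) := by
  have h2F : (2 : F) ≠ 0 := Ring.two_ne_zero hchar
  have cancel : ∀ a b : A, a + a = b + b → a = b := by
    intro a b hab
    have : (2 : F) • a = (2 : F) • b := by rw [two_smul, two_smul]; exact hab
    exact smul_right_injective A h2F this
  have left : ∀ x y : A, (x * x) * y = x * (x * y) := by
    intro x y
    have := h1 x x y
    apply cancel
    exact (eq_sub_iff_add_eq.mp this).symm
  have right : ∀ x y : A, y * (x * x) = (y * x) * x := by
    intro x y
    have := h2 y x x
    apply cancel
    exact (eq_sub_iff_add_eq.mp this).symm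
  refine ⟨?_, left, right⟩
  intro x y
  have := h1 y x y
  have hr := right y x
  -- this : y * (x * y) = (y*x)*y + (x*y)*y - x*(y*y)
  have hr2 : (x * y) * y = x * (y * y) := by
    have := h2 x y y
    apply cancel
    exact eq_sub_iff_add_eq.mp this
  rw [hr2, add_sub_cancel_right] at this
  exact this.symm
end

section
/- If A is an anticommutative g-alternative algebra over a field F, then A is antiassociative: (xy)z = −x(yz) for all x, y, z ∈ A. -/
/-- An anticommutative g-alternative algebra is antiassociative. -/
theorem anticomm_g_alternative_antiassoc (F : Type*) [Field F] (A : Type*)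
    [NonUnitalNonAssocRing A] [Module F A] [SMulCommClass F A A] [IsScalarTower F A A]
    (h1 : ∀ x y z : A, x * (y * z) = (x * y) * z + (y * x) * z - y * (x * z))
    (h2 : ∀ x y z : A, (x * y) * z = x * (y * z) + x * (z * y) - (x * z) * y)
    (hanti : ∀ x y : A, x * y = -(y * x)) :
    ∀ x y z : A, (x * y) * z = -(x * (y * z)) := by
  intro x y z
  have e1 : x * (y * z) = -(y * (x * z)) := by
    have h := h1 x y z
    rw [hanti y x, neg_mul] at h
    simpa using h
  have e2 : (x * y) * z = -((x * z) * y) := by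
    have h := h2 x y z
    rw [hanti z y, mul_neg] at h
    simpa using h
  rw [e2, hanti (x*z) y, neg_neg, e1, neg_neg]
end

section
/- If A is an anticommutative g-alternative algebra over a field F, then A is second-level associative: ((xy)z)a = (x(yz))a for all a, x, y, z ∈ A. -/
/-- An anticommutative g-alternative algebra is second-level associative. -/
theorem anticomm_g_alternative_second_level_assoc (F : Type*) [Field F] (A : Type*)
    [NonUnitalNonAssocRing A] [Module F A] [SMulCommClass F A A] [IsScalarTower F A A]
    (h1 : ∀ x y z : A, x * (y * z) = (x * y) * z + (y * x) * z - y * (x * z))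
    (h2 : ∀ x y z : A, (x * y) * z = x * (y * z) + x * (z * y) - (x * z) * y)
    (hanti : ∀ x y : A, x * y = -(y * x)) :
    ∀ a x y z : A, ((x * y) * z) * a = (x * (y * z)) * a := by
  have h1' : ∀ x y z : A, x * (y * z) = -(y * (x * z)) := by
    intro x y z
    have h := h1 x y z
    rw [hanti y x, neg_mul] at h
    rw [h]; abel
  have h2' : ∀ x y z : A, (x * y) * z = -((x * z) * y) := by
    intro x y z
    have h := h2 x y z
    rw [hanti z y, mul_neg] at h
    rw [h]; abel
  intro a x y z
  calc ((x * y) * z) * a = -(((x * y) * a) * z) := h2' (x * y) z a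
    _ = -((-((x * a) * y)) * z) := by rw [h2' x y a]
    _ = ((x * a) * y) * z := by rw [neg_mul, neg_neg]
    _ = -(((x * a) * z) * y) := h2' (x * a) y z
    _ = -(-(y * ((x * a) * z))) := by rw [hanti ((x * a) * z) y]
    _ = -((x * a) * (y * z)) := by rw [← h1' (x * a) y z]
    _ = (x * (y * z)) * a := by rw [h2' x (y * z) a]
end

section
/- If A is an anticommutative g-alternative algebra over a field F with ann(A) = 0, then A is both associative and antiassociative, and moreover x(yz) + x(yz) = 0 and (xy)z + (xy)z = 0 for all x, y, z ∈ A. -/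
/-- An anticommutative g-alternative algebra with zero annulator is associative,
antiassociative, and all triple products are 2-torsion. -/
theorem anticomm_g_alternative_ann_zero (F : Type*) [Field F] (A : Type*)
    [NonUnitalNonAssocRing A] [Module F A] [SMulCommClass F A A] [IsScalarTower F A A]
    (h1 : ∀ x y z : A, x * (y * z) = (x * y) * z + (y * x) * z - y * (x * z))
    (h2 : ∀ x y z : A, (x * y) * z = x * (y * z) + x * (z * y) - (x * z) * y)
    (hanti : ∀ x y : A, x * y = -(y * x))
    (hann : ∀ z : A, (∀ a : A, a * z = 0 ∧ z * a = 0) → z = 0) :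
    (∀ x y z : A, (x * y) * z = x * (y * z)) ∧
    (∀ x y z : A, (x * y) * z = -(x * (y * z))) ∧
    (∀ x y z : A, x * (y * z) + x * (y * z) = 0) ∧
    (∀ x y z : A, (x * y) * z + (x * y) * z = 0) := by
  have L : ∀ x y z : A, x * (y * z) = -(y * (x * z)) := by
    intro x y z
    rw [h1 x y z, hanti y x, neg_mul]
    abel
  have AA : ∀ x y z : A, (x * y) * z = -(x * (y * z)) := by
    intro x y z
    rw [hanti (x * y) z, L z x y, hanti z y, mul_neg]
    abel
  have K : ∀ p q r s : A, p * (q * (r * s)) = (q * r) * (p * s) := by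
    intro p q r s
    rw [show q * (r * s) = -((q * r) * s) from by rw [AA q r s, neg_neg],
      mul_neg, L p (q * r) s, neg_neg]
  have two_nested : ∀ p q r s : A, p * (q * (r * s)) + p * (q * (r * s)) = 0 := by
    intro p q r s
    have e1 : p * (q * (r * s)) = q * (p * (s * r)) := by
      rw [L p q (r * s), hanti r s, mul_neg, mul_neg, neg_neg]
    have e2 : p * (q * (r * s)) = -(q * (p * (s * r))) := by
      rw [K p q r s, hanti (q * r) (p * s), ← K q p s r]
    have h := e1.symm.trans e2
    rw [e1]
    exact eq_neg_iff_add_eq_zero.mp h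
  have two : ∀ x y z : A, x * (y * z) + x * (y * z) = 0 := by
    intro x y z
    apply hann
    intro a
    constructor
    · rw [mul_add]; exact two_nested a x y z
    · rw [add_mul, hanti (x * (y * z)) a, ← neg_add, two_nested a x y z, neg_zero]
  refine ⟨fun x y z => ?_, AA, two, fun x y z => ?_⟩
  · rw [AA x y z]
    exact neg_eq_of_add_eq_zero_left (two x y z)
  · rw [AA x y z, ← neg_add, two x y z, neg_zero]
end

section
/- If A is an anticommutative g-alternative algebra over a field F with characteristic different from 2 and ann(A) = 0, then A = 0, i.e. every element of A is zero. -/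
/-- An anticommutative g-alternative algebra over a field of characteristic ≠ 2
with zero annulator is trivial. -/
theorem anticomm_g_alternative_char_ne_two_trivial (F : Type*) [Field F]
    (hchar : ringChar F ≠ 2) (A : Type*)
    [NonUnitalNonAssocRing A] [Module F A] [SMulCommClass F A A] [IsScalarTower F A A]
    (h1 : ∀ x y z : A, x * (y * z) = (x * y) * z + (y * x) * z - y * (x * z))
    (h2 : ∀ x y z : A, (x * y) * z = x * (y * z) + x * (z * y) - (x * z) * y)
    (hanti : ∀ x y : A, x * y = -(y * x))
    (hann : ∀ z : A, (∀ a : A, a * z = 0 ∧ z * a = 0) → z = 0) :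
    ∀ x : A, x = 0 := by
  -- char ≠ 2 : from v + v = 0 deduce v = 0
  have two_ne : (2 : F) ≠ 0 := Ring.two_ne_zero hchar
  have half : ∀ v : A, v + v = 0 → v = 0 := by
    intro v hv
    have h2v : (2 : F) • v = 0 := by rw [two_smul]; exact hv
    rcases smul_eq_zero.mp h2v with h | h
    · exact absurd h two_ne
    · exact h
  -- left rule : x(yz) = -y(xz)
  have L : ∀ x y z : A, x * (y * z) = -(y * (x * z)) := by
    intro x y z
    have := h1 x y z
    rw [hanti y x, neg_mul] at this
    rw [this]; abel
  -- right rule : (xy)z = -((xz)y)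
  have R : ∀ x y z : A, (x * y) * z = -((x * z) * y) := by
    intro x y z
    have := h2 x y z
    rw [hanti z y, mul_neg] at this
    rw [this]; abel
  -- x(xz) = 0
  have sq : ∀ x z : A, x * (x * z) = 0 := by
    intro x z
    have := L x x z
    exact half _ (by linear_combination (norm := abel) this)
  -- (xy)(xz) = 0
  have P13 : ∀ x y z : A, (x * y) * (x * z) = 0 := by
    intro x y z
    rw [R x y (x * z), sq x z, zero_mul, neg_zero]
  -- swap of slots 1 and 3 : (ab)(cd) = -((cb)(ad))
  have S13 : ∀ a b c d : A, (a * b) * (c * d) = -((c * b) * (a * d)) := by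
    intro a b c d
    have h := P13 (a + c) b d
    rw [add_mul, add_mul, add_mul, mul_add, mul_add, P13 a b d, P13 c b d] at h
    linear_combination (norm := abel) h
  -- (xb)(yb) = 0
  have P24 : ∀ x b y : A, (x * b) * (y * b) = 0 := by
    intro x b y
    rw [hanti x b, hanti y b, neg_mul, mul_neg, neg_neg, P13]
  -- swap of slots 2 and 4 : (ab)(cd) = -((ad)(cb))
  have S24 : ∀ a b c d : A, (a * b) * (c * d) = -((a * d) * (c * b)) := by
    intro a b c d
    have h := P24 a (b + d) c
    simp only [mul_add, add_mul] at h
    rw [P24 a b c, P24 a d c] at h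
    linear_combination (norm := abel) h
  -- products of products vanish
  have Q : ∀ a b c d : A, (a * b) * (c * d) = 0 := by
    intro a b c d
    have h1' : (a * b) * (c * d) = (c * d) * (a * b) := by
      rw [S13 a b c d, S24 c b a d, neg_neg]
    have h2' : (a * b) * (c * d) = -((c * d) * (a * b)) := hanti _ _
    have hw : (c * d) * (a * b) = 0 :=
      half _ (add_eq_zero_iff_eq_neg.mpr (h1'.symm.trans h2'))
    rw [h1', hw]
  -- triple products vanish
  have T : ∀ x y z : A, (x * y) * z = 0 := by
    intro x y z
    apply hann
    intro a
    constructor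
    · rw [L a (x * y) z, Q, neg_zero]
    · rw [hanti, L a (x * y) z, Q, neg_zero, neg_zero]
  -- products vanish
  have M : ∀ x y : A, x * y = 0 := by
    intro x y
    apply hann
    intro a
    constructor
    · rw [hanti, T, neg_zero]
    · exact T x y a
  -- everything vanishes
  intro x
  apply hann
  intro a
  exact ⟨M a x, M x a⟩
end

section
/- Let A and B be g-alternative algebras over a field F, let A be anticommutative with ann(A) = 0, and suppose B has a derived action on A. Then (a₁b)a₂ = a₁(ba₂) for all a₁, a₂ ∈ A and b ∈ B. -/
theorem derived_action_middle_assoc (F : Type*) [Field F]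
    (A : Type*) [NonUnitalNonAssocRing A] [Module F A] [SMulCommClass F A A] [IsScalarTower F A A]
    (B : Type*) [NonUnitalNonAssocRing B] [Module F B] [SMulCommClass F B B] [IsScalarTower F B B]
    -- A is a g-alternative algebra
    (hA1 : ∀ x y z : A, x * (y * z) = (x * y) * z + (y * x) * z - y * (x * z))
    (hA2 : ∀ x y z : A, (x * y) * z = x * (y * z) + x * (z * y) - (x * z) * y)
    -- B is a g-alternative algebra
    (hB1 : ∀ x y z : B, x * (y * z) = (x * y) * z + (y * x) * z - y * (x * z))
    (hB2 : ∀ x y z : B, (x * y) * z = x * (y * z) + x * (z * y) - (x * z) * y)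
    -- a derived action of B on A: F-bilinear maps B×A→A and A×B→A
    (l : B →ₗ[F] A →ₗ[F] A) (r : A →ₗ[F] B →ₗ[F] A)
    (I1 : ∀ (b : B) (a₁ a₂ : A), l b (a₁ * a₂) = l b a₁ * a₂ + r a₁ b * a₂ - a₁ * l b a₂)
    (I2 : ∀ (b : B) (a₁ a₂ : A), r (a₁ * a₂) b = a₁ * r a₂ b + a₁ * l b a₂ - r a₁ b * a₂)
    (I3 : ∀ (b : B) (a₁ a₂ : A), l b a₁ * a₂ = l b (a₁ * a₂) + l b (a₂ * a₁) - l b a₂ * a₁)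
    (I4 : ∀ (b : B) (a₁ a₂ : A), a₁ * r a₂ b = r (a₁ * a₂) b + r (a₂ * a₁) b - a₂ * r a₁ b)
    (II1 : ∀ (b₁ b₂ : B) (a : A), l (b₁ * b₂) a = l b₁ (l b₂ a) + l b₁ (r a b₂) - r (l b₁ a) b₂)
    (II2 : ∀ (b₁ b₂ : B) (a : A), r a (b₁ * b₂) = r (r a b₁) b₂ + r (l b₁ a) b₂ - l b₁ (r a b₂))
    (II3 : ∀ (b₁ b₂ : B) (a : A), r (r a b₁) b₂ = r a (b₁ * b₂) + r a (b₂ * b₁) - r (r a b₂) b₁)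
    (II4 : ∀ (b₁ b₂ : B) (a : A), l b₁ (l b₂ a) = l (b₁ * b₂) a + l (b₂ * b₁) a - l b₂ (l b₁ a))
    -- A is anticommutative with ann(A) = 0
    (hanti : ∀ x y : A, x * y = -(y * x))
    (hann : ∀ z : A, (∀ a : A, a * z = 0 ∧ z * a = 0) → z = 0) :
    ∀ (a₁ a₂ : A) (b : B), r a₁ b * a₂ = a₁ * l b a₂ := by
  intro a₁ a₂ b
  have key : ∀ a : A, a * (r a₁ b * a₂ - a₁ * l b a₂) = 0 := by
    intro a
    rw [mul_sub, sub_eq_zero]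
    have h1 : ((l b (a₁ * a₂)) * a) = (((l b a₁) * a₂) * a) + (((r a₁ b) * a₂) * a) - ((a₁ * (l b a₂)) * a) := by rw [I1 b a₁ a₂, sub_mul, add_mul]
    have h2 : ((r (a₁ * a₂) b) * a) = ((a₁ * (r a₂ b)) * a) + ((a₁ * (l b a₂)) * a) - (((r a₁ b) * a₂) * a) := by rw [I2 b a₁ a₂, sub_mul, add_mul]
    have h3 : (a * ((l b a₁) * a₂)) = (a * (l b (a₁ * a₂))) + (a * (l b (a₂ * a₁))) - (a * ((l b a₂) * a₁)) := by rw [I3 b a₁ a₂, mul_sub, mul_add]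
    have h4 : (((l b a₁) * a₂) * a) = ((l b (a₁ * a₂)) * a) + ((l b (a₂ * a₁)) * a) - (((l b a₂) * a₁) * a) := by rw [I3 b a₁ a₂, sub_mul, add_mul]
    have h5 : ((a₁ * (r a₂ b)) * a) = ((r (a₁ * a₂) b) * a) + ((r (a₂ * a₁) b) * a) - ((a₂ * (r a₁ b)) * a) := by rw [I4 b a₁ a₂, sub_mul, add_mul]
    have h6 : ((l b (a₂ * a₁)) * a) = (((l b a₂) * a₁) * a) + (((r a₂ b) * a₁) * a) - ((a₂ * (l b a₁)) * a) := by rw [I1 b a₂ a₁, sub_mul, add_mul]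
    have h7 : (a₁ * (l b (a * a₂))) = (a₁ * ((l b a) * a₂)) + (a₁ * ((r a b) * a₂)) - (a₁ * (a * (l b a₂))) := by rw [I1 b a a₂, mul_sub, mul_add]
    have h8 : ((l b (a * a₂)) * a₁) = (((l b a) * a₂) * a₁) + (((r a b) * a₂) * a₁) - ((a * (l b a₂)) * a₁) := by rw [I1 b a a₂, sub_mul, add_mul]
    have h9 : (((l b a) * a₂) * a₁) = ((l b (a * a₂)) * a₁) + ((l b (a₂ * a)) * a₁) - (((l b a₂) * a) * a₁) := by rw [I3 b a a₂, sub_mul, add_mul]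
    have h10 : ((l b (a₂ * a)) * a₁) = (((l b a₂) * a) * a₁) + (((r a₂ b) * a) * a₁) - ((a₂ * (l b a)) * a₁) := by rw [I1 b a₂ a, sub_mul, add_mul]
    have h11 : ((a * (r a₁ b)) * a₂) = ((r (a * a₁) b) * a₂) + ((r (a₁ * a) b) * a₂) - ((a₁ * (r a b)) * a₂) := by rw [I4 b a a₁, sub_mul, add_mul]
    have h12 : (a₂ * (l b (a₁ * a))) = (a₂ * ((l b a₁) * a)) + (a₂ * ((r a₁ b) * a)) - (a₂ * (a₁ * (l b a))) := by rw [I1 b a₁ a, mul_sub, mul_add]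
    have h13 : (l b (a * (a₂ * a₁))) = -(l b ((a₂ * a₁) * a)) := by rw [hanti a (a₂ * a₁)]; simp only [map_neg]
    have h14 : (l b (a₁ * (a₂ * a))) = -(l b ((a₂ * a) * a₁)) := by rw [hanti a₁ (a₂ * a)]; simp only [map_neg]
    have h15 : (l b (a₂ * (a * a₁))) = -(l b ((a * a₁) * a₂)) := by rw [hanti a₂ (a * a₁)]; simp only [map_neg]
    have h16 : (a * (l b (a₁ * a₂))) = -(a * (l b (a₂ * a₁))) := by rw [hanti a₁ a₂]; simp only [map_neg, mul_neg]
    have h17 : (a * (l b (a₂ * a₁))) = -((l b (a₂ * a₁)) * a) := by rw [hanti a (l b (a₂ * a₁))]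
    have h18 : (a * ((l b a₁) * a₂)) = -(((l b a₁) * a₂) * a) := by rw [hanti a ((l b a₁) * a₂)]
    have h19 : (a₁ * (l b (a * a₂))) = -((l b (a * a₂)) * a₁) := by rw [hanti a₁ (l b (a * a₂))]
    have h20 : (a₁ * (l b (a * a₂))) = -(a₁ * (l b (a₂ * a))) := by rw [hanti a a₂]; simp only [map_neg, mul_neg]
    have h21 : (a₁ * (l b (a₂ * a))) = -((l b (a₂ * a)) * a₁) := by rw [hanti a₁ (l b (a₂ * a))]
    have h22 : (a₁ * (a₂ * (l b a))) = -((a₂ * (l b a)) * a₁) := by rw [hanti a₁ (a₂ * (l b a))]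
    have h23 : (a₁ * (a₂ * (l b a))) = -(a₁ * ((l b a) * a₂)) := by rw [hanti a₂ (l b a)]; simp only [mul_neg]
    have h24 : (a₂ * (l b (a * a₁))) = -((l b (a * a₁)) * a₂) := by rw [hanti a₂ (l b (a * a₁))]
    linear_combination (norm := abel1)  - hA1 (l b a) a₁ a₂ - hA2 (l b a) a₁ a₂ + hA1 (r a b) a₁ a₂ + hA2 (r a b) a₁ a₂ + hA1 a (r a₁ b) a₂ - hA1 a a₁ (l b a₂) - hA1 a a₁ (r a₂ b) - hA2 a a₁ (r a₂ b) + hA1 a (l b a₂) a₁ - hA1 a (r a₂ b) a₁ + hA2 (r a₁ b) a a₂ - hA2 a₁ (l b a) a₂ - hA2 a₁ a (r a₂ b) + hA1 (l b a₁) a₂ a + hA1 (r a₁ b) a₂ a - hA1 a₁ (r a₂ b) a - hA1 a₁ a₂ (l b a) - I1 b a (a₂ * a₁) - I3 b a (a₂ * a₁) - I3 b a (a₂ * a₁) - I1 b (a₂ * a₁) a - I3 b a₁ (a₂ * a) - I1 b a₂ (a * a₁) - I3 b a₂ (a * a₁) - I3 b a₂ (a * a₁) - I1 b (a * a₁) a₂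 - I1 b a₂ (a₁ * a) - I3 b a₂ (a₁ * a) - I1 b (a₁ * a) a₂ + h1 + h2 - h3 + h4 + h5 + h6 + h7 + h8 + h9 + h9 + h10 + h11 + h12 - h13 - h14 - h15 - h16 + h17 + h18 + h19 - h20 - h20 + h21 + h21 - h22 + h23 + h24
  have hz : r a₁ b * a₂ - a₁ * l b a₂ = 0 := by
    apply hann
    intro a
    refine ⟨key a, ?_⟩
    rw [hanti (r a₁ b * a₂ - a₁ * l b a₂) a, key a, neg_zero]
  exact sub_eq_zero.mp hz
end

section
/- Let A be an anticommutative g-alternative algebra over a field F with ann(A) = 0, and let B be a g-alternative algebra over F with a derived action on A. Then the action is anticommutative: ba = −ab for all a ∈ A and b ∈ B. -/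
theorem derived_action_anticommutative (F : Type*) [Field F]
    (A : Type*) [NonUnitalNonAssocRing A] [Module F A] [SMulCommClass F A A] [IsScalarTower F A A]
    (B : Type*) [NonUnitalNonAssocRing B] [Module F B] [SMulCommClass F B B] [IsScalarTower F B B]
    -- A is a g-alternative algebra
    (hA1 : ∀ x y z : A, x * (y * z) = (x * y) * z + (y * x) * z - y * (x * z))
    (hA2 : ∀ x y z : A, (x * y) * z = x * (y * z) + x * (z * y) - (x * z) * y)
    -- B is a g-alternative algebra
    (hB1 : ∀ x y z : B, x * (y * z) = (x * y) * z + (y * x) * z - y * (x * z))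
    (hB2 : ∀ x y z : B, (x * y) * z = x * (y * z) + x * (z * y) - (x * z) * y)
    -- a derived action of B on A: F-bilinear maps B×A→A and A×B→A
    (l : B →ₗ[F] A →ₗ[F] A) (r : A →ₗ[F] B →ₗ[F] A)
    (I1 : ∀ (b : B) (a₁ a₂ : A), l b (a₁ * a₂) = l b a₁ * a₂ + r a₁ b * a₂ - a₁ * l b a₂)
    (I2 : ∀ (b : B) (a₁ a₂ : A), r (a₁ * a₂) b = a₁ * r a₂ b + a₁ * l b a₂ - r a₁ b * a₂)
    (I3 : ∀ (b : B) (a₁ a₂ : A), l b a₁ * a₂ = l b (a₁ * a₂) + l b (a₂ * a₁) - l b a₂ * a₁)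
    (I4 : ∀ (b : B) (a₁ a₂ : A), a₁ * r a₂ b = r (a₁ * a₂) b + r (a₂ * a₁) b - a₂ * r a₁ b)
    (II1 : ∀ (b₁ b₂ : B) (a : A), l (b₁ * b₂) a = l b₁ (l b₂ a) + l b₁ (r a b₂) - r (l b₁ a) b₂)
    (II2 : ∀ (b₁ b₂ : B) (a : A), r a (b₁ * b₂) = r (r a b₁) b₂ + r (l b₁ a) b₂ - l b₁ (r a b₂))
    (II3 : ∀ (b₁ b₂ : B) (a : A), r (r a b₁) b₂ = r a (b₁ * b₂) + r a (b₂ * b₁) - r (r a b₂) b₁)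
    (II4 : ∀ (b₁ b₂ : B) (a : A), l b₁ (l b₂ a) = l (b₁ * b₂) a + l (b₂ * b₁) a - l b₂ (l b₁ a))
    -- A is anticommutative with ann(A) = 0
    (hanti : ∀ x y : A, x * y = -(y * x))
    (hann : ∀ z : A, (∀ a : A, a * z = 0 ∧ z * a = 0) → z = 0) :
    ∀ (a : A) (b : B), l b a = -(r a b) := by
  intro a b
  -- basic identities in A
  have hE2 : ∀ x y z : A, x * (y * z) = -(y * (x * z)) := by
    intro x y z
    have h := hA1 x y z
    rw [hanti y x, neg_mul] at h
    rw [h]; abel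
  have hE3 : ∀ x y z : A, (x * y) * z = -(x * (y * z)) := by
    intro x y z
    rw [hanti (x * y) z, hE2 z x y, hanti z y, mul_neg, neg_neg]
  have hE4 : ∀ x y z w : A, ((x * y) * z) * w = -(((x * y) * z) * w) := by
    intro x y z w
    have k3' : y * (z * w) = -((y * z) * w) := by rw [hE3 y z w, neg_neg]
    have k4' : x * ((y * z) * w) = -((x * (y * z)) * w) := by rw [hE3 x (y * z) w, neg_neg]
    have k5 : x * (y * z) = -((x * y) * z) := by rw [hE3 x y z, neg_neg]
    calc ((x * y) * z) * w = -((x * y) * (z * w)) := hE3 (x * y) z w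
      _ = -(-(x * (y * (z * w)))) := by rw [hE3 x y (z * w)]
      _ = x * (y * (z * w)) := neg_neg _
      _ = x * (-((y * z) * w)) := by rw [k3']
      _ = -(x * ((y * z) * w)) := mul_neg _ _
      _ = -(-((x * (y * z)) * w)) := by rw [k4']
      _ = (x * (y * z)) * w := neg_neg _
      _ = (-((x * y) * z)) * w := by rw [k5]
      _ = -(((x * y) * z) * w) := neg_mul _ _
  -- action identities
  have hP1 : ∀ x y : A, x * l b y = l b x * y := by
    intro x y
    have h3 := I3 b x y
    rw [hanti y x, map_neg] at h3
    rw [hanti x (l b y), h3]; abel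
  have hP2 : ∀ x y : A, x * r y b = r x b * y := by
    intro x y
    have h4 := I4 b x y
    rw [hanti y x, map_neg, LinearMap.neg_apply] at h4
    rw [hanti (r x b) y, h4]; abel
  have hP3 : ∀ x y : A, l b (x * y) = r x b * y := by
    intro x y
    have h1 := I1 b x y
    rw [hP1 x y] at h1
    rw [h1]; abel
  have hP4 : ∀ x y : A, r (x * y) b = x * l b y := by
    intro x y
    have h2 := I2 b x y
    rw [hP2 x y] at h2
    rw [h2]; abel
  have hP5 : ∀ x y z : A, l b x * (y * z) = r x b * (y * z) := by
    intro x y z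
    have h1 : l b ((x * y) * z) = (l b x * y) * z := by
      rw [hP3 (x * y) z, hP4 x y, hP1 x y]
    have h2 : l b ((x * y) * z) = -(r x b * (y * z)) := by
      rw [hE3 x y z, map_neg, hP3 x (y * z)]
    have h3 : (l b x * y) * z = -(l b x * (y * z)) := hE3 (l b x) y z
    have h4 : -(l b x * (y * z)) = -(r x b * (y * z)) := by rw [← h3, ← h1, h2]
    exact neg_injective h4
  -- the key multiplication rule
  have key : ∀ u x : A, (l b u + r u b) * x = l b (u * x) + r (u * x) b := by
    intro u x
    rw [add_mul, ← hP3 u x, hP4 u x, hP1 u x]; abel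
  -- vanishing on fourfold products
  have Q : ∀ x d e w : A, l b (((x * d) * e) * w) + r (((x * d) * e) * w) b = 0 := by
    intro x d e w
    have hq : ((x * d) * e) * w + ((x * d) * e) * w = 0 := by
      nth_rewrite 2 [hE4 x d e w]
      exact add_neg_cancel _
    have hr : r (((x * d) * e) * w) b + r (((x * d) * e) * w) b = 0 := by
      have h0 := congrArg (fun u : A => r u b) hq
      simpa using h0
    have hred : ∀ p : A, ((p * d) * e) * w = p * (d * (e * w)) := by
      intro p
      rw [hE3 (p * d) e w, hE3 p d (e * w), neg_neg]
    have hD : l b (((x * d) * e) * w) - r (((x * d) * e) * w) b = 0 := by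
      rw [hP3 ((x * d) * e) w, hP4 ((x * d) * e) w, hP1 ((x * d) * e) w,
        hP4 (x * d) e, hP1 (x * d) e, hP3 (x * d) e,
        hP3 x d, hP4 x d, hP1 x d,
        hred (r x b), hred (l b x), ← hP5 x d (e * w)]
      exact sub_self _
    have hsplit : l b (((x * d) * e) * w) + r (((x * d) * e) * w) b
        = (l b (((x * d) * e) * w) - r (((x * d) * e) * w) b)
          + (r (((x * d) * e) * w) b + r (((x * d) * e) * w) b) := by abel
    rw [hsplit, hD, hr]; simp
  -- descend with the annulator three times
  have h3 : ∀ d e : A, l b ((a * d) * e) + r ((a * d) * e) b = 0 := by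
    intro d e
    apply hann
    intro c
    constructor
    · rw [hanti c (l b ((a * d) * e) + r ((a * d) * e) b), key ((a * d) * e) c,
        Q a d e c, neg_zero]
    · rw [key ((a * d) * e) c]; exact Q a d e c
  have h2 : ∀ d : A, l b (a * d) + r (a * d) b = 0 := by
    intro d
    apply hann
    intro c
    constructor
    · rw [hanti c (l b (a * d) + r (a * d) b), key (a * d) c, h3 d c, neg_zero]
    · rw [key (a * d) c]; exact h3 d c
  have h1 : l b a + r a b = 0 := by
    apply hann
    intro c
    constructor
    · rw [hanti c (l b a + r a b), key a c, h2 c, neg_zero]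
    · rw [key a c]; exact h2 c
  exact eq_neg_of_add_eq_zero_left h1
end

section
/- Let A and B be g-alternative algebras over a field F and suppose B has a derived action on A. Then the semidirect product B ⋉ A, i.e. the F-vector space B × A with componentwise addition and multiplication (b', a')(b, a) = (b'b, a'a + a'b + b'a), is a g-alternative algebra over F. -/
theorem semidirect_product_g_alternative (F : Type*) [Field F]
    (A : Type*) [NonUnitalNonAssocRing A] [Module F A] [SMulCommClass F A A] [IsScalarTower F A A]
    (B : Type*) [NonUnitalNonAssocRing B] [Module F B] [SMulCommClass F B B] [IsScalarTower F B B]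
    -- A is a g-alternative algebra
    (hA1 : ∀ x y z : A, x * (y * z) = (x * y) * z + (y * x) * z - y * (x * z))
    (hA2 : ∀ x y z : A, (x * y) * z = x * (y * z) + x * (z * y) - (x * z) * y)
    -- B is a g-alternative algebra
    (hB1 : ∀ x y z : B, x * (y * z) = (x * y) * z + (y * x) * z - y * (x * z))
    (hB2 : ∀ x y z : B, (x * y) * z = x * (y * z) + x * (z * y) - (x * z) * y)
    -- a derived action of B on A: F-bilinear maps B×A→A and A×B→A
    (l : B →ₗ[F] A →ₗ[F] A) (r : A →ₗ[F] B →ₗ[F] A)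
    (I1 : ∀ (b : B) (a₁ a₂ : A), l b (a₁ * a₂) = l b a₁ * a₂ + r a₁ b * a₂ - a₁ * l b a₂)
    (I2 : ∀ (b : B) (a₁ a₂ : A), r (a₁ * a₂) b = a₁ * r a₂ b + a₁ * l b a₂ - r a₁ b * a₂)
    (I3 : ∀ (b : B) (a₁ a₂ : A), l b a₁ * a₂ = l b (a₁ * a₂) + l b (a₂ * a₁) - l b a₂ * a₁)
    (I4 : ∀ (b : B) (a₁ a₂ : A), a₁ * r a₂ b = r (a₁ * a₂) b + r (a₂ * a₁) b - a₂ * r a₁ b)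
    (II1 : ∀ (b₁ b₂ : B) (a : A), l (b₁ * b₂) a = l b₁ (l b₂ a) + l b₁ (r a b₂) - r (l b₁ a) b₂)
    (II2 : ∀ (b₁ b₂ : B) (a : A), r a (b₁ * b₂) = r (r a b₁) b₂ + r (l b₁ a) b₂ - l b₁ (r a b₂))
    (II3 : ∀ (b₁ b₂ : B) (a : A), r (r a b₁) b₂ = r a (b₁ * b₂) + r a (b₂ * b₁) - r (r a b₂) b₁)
    (II4 : ∀ (b₁ b₂ : B) (a : A), l b₁ (l b₂ a) = l (b₁ * b₂) a + l (b₂ * b₁) a - l b₂ (l b₁ a))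
    -- the semidirect product multiplication on B × A
    (mul : B × A → B × A → B × A)
    (hmul : ∀ p q : B × A, mul p q = (p.1 * q.1, p.2 * q.2 + r p.2 q.1 + l p.1 q.2)) :
    -- B ⋉ A is a g-alternative algebra over F: the multiplication is F-bilinear
    (∀ p q q' : B × A, mul p (q + q') = mul p q + mul p q') ∧
    (∀ p p' q : B × A, mul (p + p') q = mul p q + mul p' q) ∧
    (∀ (c : F) (p q : B × A), mul (c • p) q = c • mul p q) ∧
    (∀ (c : F) (p q : B × A), mul p (c • q) = c • mul p q) ∧
    -- and satisfies Axiom 2₁ and Axiom 2₂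
    (∀ x y z : B × A, mul x (mul y z) = mul (mul x y) z + mul (mul y x) z - mul y (mul x z)) ∧
    (∀ x y z : B × A, mul (mul x y) z = mul x (mul y z) + mul x (mul z y) - mul (mul x z) y) := by
  refine ⟨?_, ?_, ?_, ?_, ?_, ?_⟩
  · intro p q q'
    simp only [hmul, Prod.fst_add, Prod.snd_add, mul_add, map_add, LinearMap.add_apply]
    ext <;> simp <;> abel
  · intro p p' q
    simp only [hmul, Prod.fst_add, Prod.snd_add, add_mul, map_add, LinearMap.add_apply]
    ext <;> simp <;> abel
  · intro c p q
    simp only [hmul, Prod.smul_fst, Prod.smul_snd, smul_mul_assoc, map_smul,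
      LinearMap.smul_apply, Prod.smul_mk, smul_add]
  · intro c p q
    simp only [hmul, Prod.smul_fst, Prod.smul_snd, mul_smul_comm, map_smul,
      LinearMap.smul_apply, Prod.smul_mk, smul_add]
  · rintro ⟨b1, a1⟩ ⟨b2, a2⟩ ⟨b3, a3⟩
    simp only [hmul, map_add, mul_add, add_mul, LinearMap.add_apply, Prod.mk_add_mk, Prod.mk_sub_mk, Prod.mk.injEq]
    constructor
    · exact hB1 b1 b2 b3
    · rw [hA1 a1 a2 a3, I4 b3 a1 a2, I1 b2 a1 a3, II2 b2 b3 a1, I1 b1 a2 a3,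
        II2 b1 b3 a2, II4 b1 b2 a3]
      abel
  · rintro ⟨b1, a1⟩ ⟨b2, a2⟩ ⟨b3, a3⟩
    simp only [hmul, map_add, mul_add, add_mul, LinearMap.add_apply, Prod.mk_add_mk, Prod.mk_sub_mk, Prod.mk.injEq]
    constructor
    · exact hB2 b1 b2 b3
    · rw [hA2 a1 a2 a3, I2 b3 a1 a2, I2 b2 a1 a3, I3 b1 a2 a3, II3 b2 b3 a1,
        II1 b1 b3 a2, II1 b1 b2 a3]
      abel
end

section
/- Let A and B be alternative algebras over a field F and suppose B has a derived action on A in the category of alternative algebras, i.e. a derived action additionally satisfying III₁: a(ba) = (ab)a and III₂: b(ab) = (ba)b for all a ∈ A, b ∈ B. Then the semidirect product B ⋉ A, i.e. the F-vector space B × A with componentwise addition and multiplication (b', a')(b, a) = (b'b, a'a + a'b + b'a), is an alternative algebra over F. -/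
theorem semidirect_product_alternative (F : Type*) [Field F]
    (A : Type*) [NonUnitalNonAssocRing A] [Module F A] [SMulCommClass F A A] [IsScalarTower F A A]
    (B : Type*) [NonUnitalNonAssocRing B] [Module F B] [SMulCommClass F B B] [IsScalarTower F B B]
    -- A is an alternative algebra
    (hAleft : ∀ x y : A, (x * x) * y = x * (x * y))
    (hAright : ∀ x y : A, y * (x * x) = (y * x) * x)
    -- B is an alternative algebra
    (hBleft : ∀ x y : B, (x * x) * y = x * (x * y))
    (hBright : ∀ x y : B, y * (x * x) = (y * x) * x)
    -- a derived action of B on A: F-bilinear maps B×A→A and A×B→A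
    (l : B →ₗ[F] A →ₗ[F] A) (r : A →ₗ[F] B →ₗ[F] A)
    (I1 : ∀ (b : B) (a₁ a₂ : A), l b (a₁ * a₂) = l b a₁ * a₂ + r a₁ b * a₂ - a₁ * l b a₂)
    (I2 : ∀ (b : B) (a₁ a₂ : A), r (a₁ * a₂) b = a₁ * r a₂ b + a₁ * l b a₂ - r a₁ b * a₂)
    (I3 : ∀ (b : B) (a₁ a₂ : A), l b a₁ * a₂ = l b (a₁ * a₂) + l b (a₂ * a₁) - l b a₂ * a₁)
    (I4 : ∀ (b : B) (a₁ a₂ : A), a₁ * r a₂ b = r (a₁ * a₂) b + r (a₂ * a₁) b - a₂ * r a₁ b)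
    (II1 : ∀ (b₁ b₂ : B) (a : A), l (b₁ * b₂) a = l b₁ (l b₂ a) + l b₁ (r a b₂) - r (l b₁ a) b₂)
    (II2 : ∀ (b₁ b₂ : B) (a : A), r a (b₁ * b₂) = r (r a b₁) b₂ + r (l b₁ a) b₂ - l b₁ (r a b₂))
    (II3 : ∀ (b₁ b₂ : B) (a : A), r (r a b₁) b₂ = r a (b₁ * b₂) + r a (b₂ * b₁) - r (r a b₂) b₁)
    (II4 : ∀ (b₁ b₂ : B) (a : A), l b₁ (l b₂ a) = l (b₁ * b₂) a + l (b₂ * b₁) a - l b₂ (l b₁ a))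
    -- the action is a derived action in the category of alternative algebras
    (III1 : ∀ (a : A) (b : B), a * l b a = r a b * a)
    (III2 : ∀ (a : A) (b : B), l b (r a b) = r (l b a) b)
    -- the semidirect product multiplication on B × A
    (mul : B × A → B × A → B × A)
    (hmul : ∀ p q : B × A, mul p q = (p.1 * q.1, p.2 * q.2 + r p.2 q.1 + l p.1 q.2)) :
    -- B ⋉ A is an alternative algebra over F: the multiplication is F-bilinear
    (∀ p q q' : B × A, mul p (q + q') = mul p q + mul p q') ∧
    (∀ p p' q : B × A, mul (p + p') q = mul p q + mul p' q) ∧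
    (∀ (c : F) (p q : B × A), mul (c • p) q = c • mul p q) ∧
    (∀ (c : F) (p q : B × A), mul p (c • q) = c • mul p q) ∧
    -- and satisfies the left and right alternative laws
    (∀ x y : B × A, mul (mul x x) y = mul x (mul x y)) ∧
    (∀ x y : B × A, mul y (mul x x) = mul (mul y x) x) := by

  refine ⟨?_, ?_, ?_, ?_, ?_, ?_⟩
  · intro p q q'
    simp only [hmul, Prod.fst_add, Prod.snd_add, Prod.mk_add_mk, map_add,
      LinearMap.add_apply, mul_add]
    rw [Prod.mk.injEq]
    exact ⟨rfl, by abel⟩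
  · intro p p' q
    simp only [hmul, Prod.fst_add, Prod.snd_add, Prod.mk_add_mk, map_add,
      LinearMap.add_apply, add_mul]
    rw [Prod.mk.injEq]
    exact ⟨rfl, by abel⟩
  · intro c p q
    simp only [hmul, Prod.smul_fst, Prod.smul_snd, Prod.smul_mk, map_smul,
      LinearMap.smul_apply, smul_mul_assoc, smul_add]
  · intro c p q
    simp only [hmul, Prod.smul_fst, Prod.smul_snd, Prod.smul_mk, map_smul,
      LinearMap.smul_apply, mul_smul_comm, smul_add]
  · rintro ⟨b, a⟩ ⟨c, d⟩
    simp only [hmul, map_add, LinearMap.add_apply, add_mul, mul_add, Prod.mk.injEq]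
    refine ⟨hBleft b c, ?_⟩
    linear_combination (norm := abel1) hAleft a d - I1 b a d + I2 c a a + III1 a c
      - II2 b c a + II1 b b d + III2 d b
  · rintro ⟨b, a⟩ ⟨c, d⟩
    simp only [hmul, map_add, LinearMap.add_apply, add_mul, mul_add, Prod.mk.injEq]
    refine ⟨hBright b c, ?_⟩
    linear_combination (norm := abel1) hAright a d - I2 b d a + II2 b b d - III2 d b
      + I1 c a a - III1 a c - II1 c b a
end

section
/- Let A be an anticommutative g-alternative algebra over a field F of characteristic 2 with ann(A) = 0. Then A is commutative and associative. -/
/-- An anticommutative g-alternative algebra over a field of characteristic 2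
with zero annulator is commutative and associative. -/
theorem anticomm_g_alternative_char_two_comm_assoc (F : Type*) [Field F]
    (hchar : ringChar F = 2) (A : Type*)
    [NonUnitalNonAssocRing A] [Module F A] [SMulCommClass F A A] [IsScalarTower F A A]
    (h1 : ∀ x y z : A, x * (y * z) = (x * y) * z + (y * x) * z - y * (x * z))
    (h2 : ∀ x y z : A, (x * y) * z = x * (y * z) + x * (z * y) - (x * z) * y)
    (hanti : ∀ x y : A, x * y = -(y * x))
    (hann : ∀ z : A, (∀ a : A, a * z = 0 ∧ z * a = 0) → z = 0) :
    (∀ x y : A, x * y = y * x) ∧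
    (∀ x y z : A, (x * y) * z = x * (y * z)) := by
  have h2F : (2 : F) = 0 := by
    have := CharP.cast_eq_zero F (ringChar F)
    rwa [hchar] at this
  have hadd : ∀ a : A, a + a = 0 := by
    intro a
    have := two_smul F a
    rw [h2F, zero_smul] at this
    exact this.symm
  have hcomm : ∀ x y : A, x * y = y * x := by
    intro x y
    rw [hanti x y]
    exact neg_eq_of_add_eq_zero_left (hadd (y * x))
  have hP : ∀ x y z : A, x * (y * z) = y * (x * z) := by
    intro x y z
    have h := h1 x y z
    rw [hcomm y x] at h
    rw [hadd, zero_sub] at h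
    exact h.trans (neg_eq_of_add_eq_zero_left (hadd _))
  refine ⟨hcomm, fun x y z => ?_⟩
  calc (x * y) * z = z * (x * y) := hcomm _ _
    _ = x * (z * y) := hP z x y
    _ = x * (y * z) := by rw [hcomm z y]
end
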